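/- Fix 0 < r < 1 and let f_x(z) = −(1/x)·ω(z, x)/ω(z, 1/x) with ω the Schottky–Klein prime function of A_r. Then for x ∈ (r, 1), f_x'(x) = (1/(1 − x²)) · ∏_{n=1}^∞ (1 − r^{2n})² / ((1 − r^{2n} x²)(1 − r^{2n} x^{−2})), and consequently f_x'(x) > 1/(1 − x²). -/

import Mathlib

/-! Write `ω(z, a) = (z - a) P_a(z)`. The product `P_a` converges locally uniformly on `ℂ \ {0}`,
since its `n`-th factor is `1 + O(r^{2n})` there, so it is continuous; and `P_x(x) = 1`. Hence
`f_x(z) = (z - x) G(z)` with `G` continuous at `x`, and `f_x'(x) = G(x) = -(1/x) / ω(x, 1/x)`.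
At `z = x`, `a = 1/x` every factor of `P_{1/x}` is the real number
`(1 - q x²)(1 - q x⁻²)/(1 - q)² ∈ (0, 1)` with `q = r^{2n}`: it is below `1` because
`(1 - q)² - (1 - q x²)(1 - q x⁻²) = q (x - x⁻¹)² > 0`. So the product in the formula, the
reciprocal of `P_{1/x}(x)`, has all factors `> 1` and exceeds `1`. -/

open scoped ComplexConjugate

/-- The Schottky–Klein prime function of the annulus `A_r`:
`ω(z,a) = (z-a) ∏_{n=1}^∞ (1 - r^{2n} z/a)(1 - r^{2n} a/z)/(1 - r^{2n})²`. -/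
noncomputable def skPrime (r : ℝ) (z a : ℂ) : ℂ :=
  (z - a) * ∏' n : ℕ,
    ((1 - (r : ℂ) ^ (2 * (n + 1)) * z / a) * (1 - (r : ℂ) ^ (2 * (n + 1)) * a / z))
      / (1 - (r : ℂ) ^ (2 * (n + 1))) ^ 2

/-- The canonical conformal map `f_x(z) = -(1/x) ω(z,x)/ω(z,1/x)` of the annulus
`A_r` onto a circularly slit disk, expressed via the Schottky–Klein prime function. -/
noncomputable def slitMap (r x : ℝ) (z : ℂ) : ℂ :=
  -(1 / (x : ℂ)) * skPrime r z (x : ℂ) / skPrime r z (1 / (x : ℂ))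

open Filter Topology

theorem hasDerivAt_sub_smul_of_continuousAt {𝕜 F : Type*} [NontriviallyNormedField 𝕜]
    [NormedAddCommGroup F] [NormedSpace 𝕜 F] {g : 𝕜 → F} {a : 𝕜} (hg : ContinuousAt g a) :
    HasDerivAt (fun z => (z - a) • g z) (g a) a := by
  rw [hasDerivAt_iff_tendsto_slope]
  refine (hg.tendsto.mono_left nhdsWithin_le_nhds).congr' ?_
  filter_upwards [self_mem_nhdsWithin] with z hz
  rw [slope_def_module, sub_self, zero_smul, sub_zero, smul_smul,
    inv_mul_cancel₀ (sub_ne_zero.mpr hz), one_smul]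

theorem le_hasProd_of_one_le {ι α : Type*} [CommMonoidWithZero α] [PartialOrder α]
    [ZeroLEOneClass α] [PosMulMono α] [TopologicalSpace α] [ClosedIciTopology α] {f : ι → α}
    {a : α} (hf : HasProd f a) (h1 : ∀ j, 1 ≤ f j) (i : ι) : f i ≤ a := by
  refine ge_of_tendsto hf (eventually_atTop.mpr ⟨{i}, fun s hs => ?_⟩)
  simpa using Finset.prod_le_prod_of_subset_of_one_le hs
    (fun j _ => zero_le_one.trans (h1 j)) fun j _ _ => h1 j

section SKFactor

variable {𝕜 : Type*}

def skFactor [Field 𝕜] (q a z : 𝕜) : 𝕜 := (1 - q * z / a) * (1 - q * a / z) / (1 - q) ^ 2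

section Field

variable [Field 𝕜] {q a z : 𝕜}

theorem skFactor_self (hq : q ≠ 1) (ha : a ≠ 0) : skFactor q a a = 1 := by
  have : (1 - q) ^ 2 ≠ 0 := pow_ne_zero 2 (sub_ne_zero.mpr hq.symm)
  rw [skFactor, mul_div_cancel_right₀ q ha, ← sq, div_self this]

theorem skFactor_sub_one (hq : q ≠ 1) (ha : a ≠ 0) (hz : z ≠ 0) :
    skFactor q a z - 1 = q * (2 - z / a - a / z) / (1 - q) ^ 2 := by
  have : (1 - q) ^ 2 ≠ 0 := pow_ne_zero 2 (sub_ne_zero.mpr hq.symm)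
  rw [skFactor]
  field_simp
  ring

theorem skFactor_one_div_self (ha : a ≠ 0) :
    skFactor q (1 / a) a = (1 - q * a ^ 2) * (1 - q / a ^ 2) / (1 - q) ^ 2 := by
  rw [skFactor]
  field_simp

end Field

variable [NormedField 𝕜] {q a z : 𝕜}

theorem norm_skFactor_sub_one_le {ρ M : ℝ} (hqρ : ‖q‖ ≤ ρ) (hρ : ρ < 1) (ha : a ≠ 0)
    (hz : z ≠ 0) (hM : ‖z / a‖ + ‖a / z‖ ≤ M) :
    ‖skFactor q a z - 1‖ ≤ ‖q‖ * (2 + M) / (1 - ρ) ^ 2 := by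
  have hq : q ≠ 1 := by rintro rfl; rw [norm_one] at hqρ; linarith
  have h1q : 1 - ρ ≤ ‖1 - q‖ := by
    have := norm_sub_norm_le (1 : 𝕜) q
    rw [norm_one] at this
    linarith
  have hnum : ‖(2 : 𝕜) - z / a - a / z‖ ≤ 2 + M := by
    calc ‖(2 : 𝕜) - z / a - a / z‖ = ‖(1 - z / a) + (1 - a / z)‖ := by ring_nf
      _ ≤ (1 + ‖z / a‖) + (1 + ‖a / z‖) := by
        grw [norm_add_le, norm_sub_le, norm_sub_le, norm_one]
      _ ≤ 2 + M := by linarith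
  rw [skFactor_sub_one hq ha hz, norm_div, norm_mul, norm_pow]
  have : 0 ≤ 2 + M := by linarith [norm_nonneg (z / a), norm_nonneg (a / z)]
  gcongr

variable {t : 𝕜}

theorem norm_pow_two_mul_add_one_le (ht : ‖t‖ ≤ 1) (n : ℕ) : ‖t ^ (2 * (n + 1))‖ ≤ ‖t‖ ^ 2 := by
  rw [norm_pow]
  exact pow_le_pow_of_le_one (norm_nonneg t) ht (by omega)

theorem pow_two_mul_add_one_ne_one (ht : ‖t‖ < 1) (n : ℕ) : t ^ (2 * (n + 1)) ≠ 1 := by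
  intro h
  have := norm_pow_two_mul_add_one_le ht.le n
  rw [h, norm_one] at this
  nlinarith [norm_nonneg t]

theorem summable_norm_pow_two_mul_add_one (ht : ‖t‖ < 1) :
    Summable fun n : ℕ => ‖t ^ (2 * (n + 1))‖ := by
  simp_rw [norm_pow, pow_mul]
  exact (summable_nat_add_iff 1).mpr
    (summable_geometric_of_lt_one (by positivity) (by nlinarith [norm_nonneg t]))

theorem summable_norm_skFactor_sub_one (ht : ‖t‖ < 1) (ha : a ≠ 0) (hz : z ≠ 0) :
    Summable fun n : ℕ => ‖skFactor (t ^ (2 * (n + 1))) a z - 1‖ :=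
  .of_nonneg_of_le (fun _ => norm_nonneg _)
    (fun n => norm_skFactor_sub_one_le (norm_pow_two_mul_add_one_le ht.le n)
      (by nlinarith [norm_nonneg t]) ha hz le_rfl)
    (((summable_norm_pow_two_mul_add_one ht).mul_right (2 + (‖z / a‖ + ‖a / z‖))).div_const
      ((1 - ‖t‖ ^ 2) ^ 2))

theorem multipliable_skFactor [CompleteSpace 𝕜] (ht : ‖t‖ < 1) (ha : a ≠ 0) (hz : z ≠ 0) :
    Multipliable fun n : ℕ => skFactor (t ^ (2 * (n + 1))) a z := by
  simpa using multipliable_one_add_of_summable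
    (f := fun n : ℕ => skFactor (t ^ (2 * (n + 1))) a z - 1)
    (summable_norm_skFactor_sub_one ht ha hz)

theorem tprod_skFactor_ne_zero [CompleteSpace 𝕜] (ht : ‖t‖ < 1) (ha : a ≠ 0) (hz : z ≠ 0)
    (hne : ∀ n : ℕ, skFactor (t ^ (2 * (n + 1))) a z ≠ 0) :
    ∏' n : ℕ, skFactor (t ^ (2 * (n + 1))) a z ≠ 0 := by
  simpa using tprod_one_add_ne_zero_of_summable
    (f := fun n : ℕ => skFactor (t ^ (2 * (n + 1))) a z - 1)
    (by simpa using hne) (summable_norm_skFactor_sub_one ht ha hz)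

theorem hasProd_inv_skFactor [CompleteSpace 𝕜] (ht : ‖t‖ < 1) (ha : a ≠ 0) (hz : z ≠ 0)
    (hne : ∀ n : ℕ, skFactor (t ^ (2 * (n + 1))) a z ≠ 0) :
    HasProd (fun n : ℕ => (skFactor (t ^ (2 * (n + 1))) a z)⁻¹)
      (∏' n : ℕ, skFactor (t ^ (2 * (n + 1))) a z)⁻¹ :=
  (multipliable_skFactor ht ha hz).hasProd.inv₀ (tprod_skFactor_ne_zero ht ha hz hne)

theorem continuousAt_tprod_skFactor [CompleteSpace 𝕜] [LocallyCompactSpace 𝕜] (ht : ‖t‖ < 1)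
    (ha : a ≠ 0) {z₀ : 𝕜} (hz₀ : z₀ ≠ 0) :
    ContinuousAt (fun z => ∏' n : ℕ, skFactor (t ^ (2 * (n + 1))) a z) z₀ := by
  set s := Metric.ball z₀ (‖z₀‖ / 2)
  have hz₀' : 0 < ‖z₀‖ := norm_pos_iff.mpr hz₀
  have hnorm : ∀ z ∈ s, ‖z₀‖ / 2 ≤ ‖z‖ ∧ ‖z‖ ≤ 2 * ‖z₀‖ := by
    intro z hz
    rw [Metric.mem_ball, dist_eq_norm] at hz
    constructor <;> linarith [norm_sub_norm_le z₀ z, norm_sub_norm_le z z₀, norm_sub_rev z z₀]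
  have hs0 : ∀ z ∈ s, z ≠ 0 := fun z hz =>
    norm_pos_iff.mp (lt_of_lt_of_le (by positivity) (hnorm z hz).1)
  set M := 2 * ‖z₀‖ / ‖a‖ + ‖a‖ / (‖z₀‖ / 2)
  have hM : ∀ z ∈ s, ‖z / a‖ + ‖a / z‖ ≤ M := by
    intro z hz
    rw [norm_div, norm_div]
    exact add_le_add (div_le_div_of_nonneg_right (hnorm z hz).2 (norm_nonneg a))
      (div_le_div_of_nonneg_left (norm_nonneg a) (by positivity) (hnorm z hz).1)
  have hfac : ∀ n : ℕ, ContinuousOn (skFactor (t ^ (2 * (n + 1))) a) s := by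
    intro n
    unfold skFactor
    fun_prop (disch := assumption)
  have hprod := Summable.hasProdLocallyUniformlyOn_nat_one_add Metric.isOpen_ball
    (((summable_norm_pow_two_mul_add_one ht).mul_right (2 + M)).div_const ((1 - ‖t‖ ^ 2) ^ 2))
    (.of_forall fun n z hz => norm_skFactor_sub_one_le (norm_pow_two_mul_add_one_le ht.le n)
      (by nlinarith [norm_nonneg t]) ha (hs0 z hz) (hM z hz))
    (fun n => (hfac n).sub continuousOn_const)
  simp only [add_sub_cancel] at hprod
  refine (hprod.continuousOn (.of_forall fun _ => ?_)).continuousAt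
    (Metric.isOpen_ball.mem_nhds (Metric.mem_ball_self (by positivity)))
  exact continuousOn_finsetProd _ fun n _ => hfac n

end SKFactor

theorem one_lt_sq_one_sub_div_mul {q x : ℝ} (hq : 0 < q) (hx0 : x ≠ 0) (hx1 : x ^ 2 ≠ 1)
    (h₁ : 0 < 1 - q * x ^ 2) (h₂ : 0 < 1 - q / x ^ 2) :
    1 < (1 - q) ^ 2 / ((1 - q * x ^ 2) * (1 - q / x ^ 2)) := by
  have key : (1 - q) ^ 2 - (1 - q * x ^ 2) * (1 - q / x ^ 2) = q * (x ^ 2 - 1) ^ 2 / x ^ 2 := by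
    field_simp
    ring
  have : 0 < q * (x ^ 2 - 1) ^ 2 / x ^ 2 := by
    have : (x ^ 2 - 1) ^ 2 ≠ 0 := pow_ne_zero 2 (sub_ne_zero.mpr hx1)
    positivity
  rw [one_lt_div (mul_pos h₁ h₂)]
  linarith

section SchottkyKlein

variable {r : ℝ}

theorem skPrime_eq_sub_mul_tprod (z a : ℂ) :
    skPrime r z a = (z - a) * ∏' n : ℕ, skFactor ((r : ℂ) ^ (2 * (n + 1))) a z :=
  rfl

theorem hasDerivAt_slitMap (hr : |r| < 1) {x : ℝ} (hx : x ≠ 0)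
    (hω : skPrime r x (1 / x) ≠ 0) :
    HasDerivAt (slitMap r x) (-(1 / x) / skPrime r x (1 / x)) x := by
  have hr' : ‖(r : ℂ)‖ < 1 := by rwa [Complex.norm_real, Real.norm_eq_abs]
  have hxC : (x : ℂ) ≠ 0 := Complex.ofReal_ne_zero.mpr hx
  set G : ℂ → ℂ := fun z =>
    -(1 / x) * (∏' n : ℕ, skFactor ((r : ℂ) ^ (2 * (n + 1))) x z) / skPrime r z (1 / x)
  have hG : ContinuousAt G x := by
    refine (continuousAt_const.mul (continuousAt_tprod_skFactor hr' hxC hxC)).div ?_ hω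
    simp only [skPrime_eq_sub_mul_tprod]
    exact (continuousAt_id.sub continuousAt_const).mul
      (continuousAt_tprod_skFactor hr' (one_div_ne_zero hxC) hxC)
  have hf : slitMap r x = fun z : ℂ => (z - x) • G z := by
    funext z
    simp only [slitMap, skPrime_eq_sub_mul_tprod z x, G, smul_eq_mul]
    ring
  have hGx : G x = -(1 / x) / skPrime r x (1 / x) := by
    simp [G, skFactor_self (pow_two_mul_add_one_ne_one hr' _) hxC]
  rw [hf, ← hGx]
  exact hasDerivAt_sub_smul_of_continuousAt hG

theorem skPrime_one_div_self (hr : |r| < 1) {x : ℝ} (hx : x ≠ 0) :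
    skPrime r x (1 / x) =
      (x - 1 / x) * ((∏' n : ℕ, skFactor (r ^ (2 * (n + 1))) (1 / x) x : ℝ) : ℂ) := by
  have hr' : ‖r‖ < 1 := by rwa [Real.norm_eq_abs]
  have h := (multipliable_skFactor hr' (one_div_ne_zero hx) hx).hasProd.map
    Complex.ofRealHom Complex.continuous_ofReal
  rw [skPrime_eq_sub_mul_tprod]
  refine congrArg _ (Eq.trans ?_ h.tprod_eq)
  congr 1
  funext n
  simp [skFactor]

theorem deriv_slitMap (hr : |r| < 1) {x : ℝ} (hx0 : x ≠ 0) (hx1 : x ^ 2 ≠ 1)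
    (hne : ∀ n : ℕ, skFactor (r ^ (2 * (n + 1))) (1 / x) x ≠ 0) :
    deriv (slitMap r x) x =
      ((1 / (1 - x ^ 2) * (∏' n : ℕ, skFactor (r ^ (2 * (n + 1))) (1 / x) x)⁻¹ : ℝ) : ℂ) := by
  set c := ∏' n : ℕ, skFactor (r ^ (2 * (n + 1))) (1 / x) x
  have hc : c ≠ 0 :=
    tprod_skFactor_ne_zero (by rwa [Real.norm_eq_abs]) (one_div_ne_zero hx0) hx0 hne
  have hsub : x ^ 2 - 1 ≠ 0 := sub_ne_zero.mpr hx1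
  have hω : skPrime r x (1 / x) = ((x - 1 / x) * c : ℝ) := by
    rw [skPrime_one_div_self hr hx0]
    push_cast
    rfl
  have hω0 : (x - 1 / x) * c ≠ 0 := mul_ne_zero (by field_simp; exact div_ne_zero hsub hx0) hc
  rw [(hasDerivAt_slitMap hr hx0 (hω ▸ by exact_mod_cast hω0)).deriv, hω]
  exact_mod_cast show -(1 / x) / ((x - 1 / x) * c) = 1 / (1 - x ^ 2) * c⁻¹ by
    field_simp
    ring

theorem one_lt_inv_skFactor_one_div_self (hr0 : 0 < r) {x : ℝ} (hrx : r < x) (hx1 : x < 1)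
    (n : ℕ) : 1 < (skFactor (r ^ (2 * (n + 1))) (1 / x) x)⁻¹ := by
  have hx0 : 0 < x := hr0.trans hrx
  have hx2 : x ^ 2 < 1 := by nlinarith
  have hq : r ^ (2 * (n + 1)) < x ^ 2 :=
    (pow_le_pow_of_le_one hr0.le (hrx.trans hx1).le (by omega : 2 ≤ 2 * (n + 1))).trans_lt
      (by nlinarith)
  have hqx : r ^ (2 * (n + 1)) * x ^ 2 < 1 * x ^ 2 :=
    mul_lt_mul_of_pos_right (hq.trans hx2) (by positivity)
  rw [skFactor_one_div_self hx0.ne', inv_div]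
  exact one_lt_sq_one_sub_div_mul (by positivity) hx0.ne' hx2.ne (by linarith)
    (by rw [sub_pos, div_lt_one (by positivity)]; exact hq)

end SchottkyKlein

/-- Explicit formula for `f_x'(x)`:
`f_x'(x) = (1/(1-x²)) ∏_{n=1}^∞ (1-r^{2n})²/((1-r^{2n}x²)(1-r^{2n}x^{-2}))`,
and consequently `f_x'(x) > 1/(1-x²)`. -/
theorem slitMap_deriv (r : ℝ) (hr0 : 0 < r) (hr1 : r < 1)
    (x : ℝ) (hx : x ∈ Set.Ioo r 1) :
    deriv (slitMap r x) (x : ℂ) =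
      ((1 / (1 - x ^ 2) * ∏' n : ℕ, (1 - r ^ (2 * (n + 1))) ^ 2 /
        ((1 - r ^ (2 * (n + 1)) * x ^ 2) * (1 - r ^ (2 * (n + 1)) / x ^ 2)) : ℝ) : ℂ)
    ∧ 1 / (1 - x ^ 2) <
        1 / (1 - x ^ 2) * ∏' n : ℕ, (1 - r ^ (2 * (n + 1))) ^ 2 /
          ((1 - r ^ (2 * (n + 1)) * x ^ 2) * (1 - r ^ (2 * (n + 1)) / x ^ 2)) := by
  obtain ⟨hrx, hx1⟩ := hx
  have hx0 : 0 < x := hr0.trans hrx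
  have hr : |r| < 1 := abs_lt.mpr ⟨by linarith, hr1⟩
  have hx2 : x ^ 2 < 1 := by nlinarith
  have hone := one_lt_inv_skFactor_one_div_self hr0 hrx hx1
  have hne (n : ℕ) : skFactor (r ^ (2 * (n + 1))) (1 / x) x ≠ 0 := fun h =>
    (one_pos.trans (hone n)).ne' (by rw [h, inv_zero])
  have hv (n : ℕ) : (skFactor (r ^ (2 * (n + 1))) (1 / x) x)⁻¹ = (1 - r ^ (2 * (n + 1))) ^ 2 /
      ((1 - r ^ (2 * (n + 1)) * x ^ 2) * (1 - r ^ (2 * (n + 1)) / x ^ 2)) := by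
    rw [skFactor_one_div_self hx0.ne', inv_div]
  have hinv := hasProd_inv_skFactor (by rwa [Real.norm_eq_abs]) (one_div_ne_zero hx0.ne')
    hx0.ne' hne
  simp_rw [← hv, hinv.tprod_eq]
  exact ⟨deriv_slitMap hr hx0.ne' hx2.ne hne, lt_mul_of_one_lt_right (by simpa using hx2)
    ((hone 0).trans_le (le_hasProd_of_one_le hinv (fun n => (hone n).le) 0))⟩
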